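/- Let σ ∈ AC₂(a,b;M) and let v be a velocity for σ. Let φ : ℝ^D → ℝ^D be a smooth diffeomorphism equal to the identity outside a compact set. Then the curve t ↦ φ_#σ_t belongs to AC₂(a,b;M), and the field (φ_*v)_t := (∇φ·v_t)∘φ⁻¹ is a velocity for it. -/

import Mathlib

/-!
A diffeomorphism `φ` that is the identity off a compact set has bounded differential, hence is
`L`-Lipschitz. Pushing a coupling of `μ, ν` forward by `φ × φ` gives a coupling of `φ_#μ, φ_#ν`
whose cost is at most `L²` times the original one, so `W₂(φ_#μ, φ_#ν) ≤ L W₂(μ, ν)` and `L β` is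
an `AC₂` modulus for `t ↦ φ_#σ_t`. For the continuity equation, test the equation of `σ` against
`(t, x) ↦ u(t, φ x)`: by the chain rule `d(u_t ∘ φ)(v_t) = du_t(∇φ v_t) ∘ φ`, and the change of
variables `y = φ x` turns it into the equation of `φ_#σ` with the field `φ_*v`.
-/

open MeasureTheory Filter Set
open scoped RealInnerProductSpace Topology

noncomputable section

abbrev Euc (D : ℕ) := EuclideanSpace ℝ (Fin D)

variable {D : ℕ}

/-- The Wasserstein space `M`: Borel probability measures with finite second moment. -/
def InM (μ : Measure (Euc D)) : Prop :=
  IsProbabilityMeasure μ ∧ Integrable (fun x => ‖x‖ ^ 2) μ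

/-- `γ` is a coupling of `μ` and `ν`. -/
def IsCoupling (μ ν : Measure (Euc D)) (γ : Measure (Euc D × Euc D)) : Prop :=
  IsProbabilityMeasure γ ∧ γ.map Prod.fst = μ ∧ γ.map Prod.snd = ν

/-- Transport cost of a coupling. -/
def Wcost (γ : Measure (Euc D × Euc D)) : ℝ :=
  ∫ p, ‖p.1 - p.2‖ ^ 2 ∂γ

/-- Squared Wasserstein distance. -/
def W2sq (μ ν : Measure (Euc D)) : ℝ :=
  sInf (Wcost '' {γ | IsCoupling μ ν γ})

/-- Wasserstein distance. -/
def W2 (μ ν : Measure (Euc D)) : ℝ := Real.sqrt (W2sq μ ν)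

/-- Optimal couplings `Γ_o(μ,ν)`. -/
def IsOptCoupling (μ ν : Measure (Euc D)) (γ : Measure (Euc D × Euc D)) : Prop :=
  IsCoupling μ ν γ ∧ Wcost γ = W2sq μ ν

/-- Membership in `L²(μ)` for vector fields. -/
def MemL2 (μ : Measure (Euc D)) (X : Euc D → Euc D) : Prop :=
  AEStronglyMeasurable X μ ∧ Integrable (fun x => ‖X x‖ ^ 2) μ

/-- The `L²(μ)` norm of a vector field. -/
def L2norm (μ : Measure (Euc D)) (X : Euc D → Euc D) : ℝ :=
  Real.sqrt (∫ x, ‖X x‖ ^ 2 ∂μ)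

/-- Smooth compactly supported functions. -/
def Cinfc (f : Euc D → ℝ) : Prop :=
  ContDiff ℝ (⊤ : ℕ∞) f ∧ HasCompactSupport f

/-- Smooth compactly supported vector fields. -/
def CinfcVF (X : Euc D → Euc D) : Prop :=
  ContDiff ℝ (⊤ : ℕ∞) X ∧ HasCompactSupport X

/-- `X ∈ Ker(div_μ)`. -/
def InKerDiv (μ : Measure (Euc D)) (X : Euc D → Euc D) : Prop :=
  MemL2 μ X ∧ ∀ f : Euc D → ℝ, Cinfc f → ∫ x, fderiv ℝ f x (X x) ∂μ = 0

/-- `X ∈ T_μM`, the closure of gradients of smooth compactly supported functions in `L²(μ)`. -/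
def InTangent (μ : Measure (Euc D)) (X : Euc D → Euc D) : Prop :=
  MemL2 μ X ∧ ∀ ε > 0, ∃ f : Euc D → ℝ, Cinfc f ∧
    L2norm μ (fun x => X x - gradient f x) < ε

/-- `F` is differentiable at `μ` with Wasserstein gradient `G = ∇_μF ∈ T_μM`. -/
def HasWGradient (F : Measure (Euc D) → ℝ) (μ : Measure (Euc D)) (G : Euc D → Euc D) : Prop :=
  InTangent μ G ∧
  ∀ ε > 0, ∃ δ > 0, ∀ ν : Measure (Euc D), InM ν → W2 μ ν < δ →
    ∀ γ : Measure (Euc D × Euc D), IsOptCoupling μ ν γ →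
      |F ν - F μ - (∫ p, ⟪G p.1, p.2 - p.1⟫ ∂γ)| ≤ ε * W2 μ ν

/-- The curve `σ` belongs to `AC₂(a,b;M)`. -/
def IsAC2 (a b : ℝ) (σ : ℝ → Measure (Euc D)) : Prop :=
  (∀ t ∈ Set.Ioo a b, InM (σ t)) ∧
  ∃ β : ℝ → ℝ, Integrable (fun τ => β τ ^ 2) (volume.restrict (Set.Ioo a b)) ∧
    ∀ s t : ℝ, a < s → s < t → t < b → W2 (σ s) (σ t) ≤ ∫ τ in s..t, β τ

/-- `v` is a velocity for the curve `σ` on `(a,b)`. -/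
def IsVelocity (a b : ℝ) (σ : ℝ → Measure (Euc D)) (v : ℝ → Euc D → Euc D) : Prop :=
  Measurable (Function.uncurry v) ∧
  (∀ᵐ t ∂(volume.restrict (Set.Ioo a b)), MemL2 (σ t) (v t)) ∧
  ∀ φ : ℝ → Euc D → ℝ,
    ContDiff ℝ (⊤ : ℕ∞) (Function.uncurry φ) →
    HasCompactSupport (Function.uncurry φ) →
    tsupport (Function.uncurry φ) ⊆ Set.Ioo a b ×ˢ Set.univ →
    ∫ t in Set.Ioo a b, ∫ x, (deriv (fun s => φ s x) t + fderiv ℝ (φ t) x (v t x)) ∂(σ t) = 0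

/-- `v` is the velocity of minimal norm for `σ`: a velocity with `v_t ∈ T_{σ_t}M` a.e. -/
def IsMinimalVelocity (a b : ℝ) (σ : ℝ → Measure (Euc D)) (v : ℝ → Euc D → Euc D) : Prop :=
  IsVelocity a b σ v ∧ ∀ᵐ t ∂(volume.restrict (Set.Ioo a b)), InTangent (σ t) (v t)

/-- Evaluation of the pseudo 1-form with Riesz representatives `A` at `μ` on `X`. -/
def pfEval (A : Measure (Euc D) → Euc D → Euc D) (μ : Measure (Euc D))
    (X : Euc D → Euc D) : ℝ :=
  ∫ x, ⟪A μ x, X x⟫ ∂μ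

/-- A regular pseudo 1-form on the Wasserstein space, given by its Riesz representatives `A`,
matrix fields `B`, constant `c` and moduli `O`. -/
structure RegularPseudoForm (D : ℕ) where
  A : Measure (Euc D) → Euc D → Euc D
  B : Measure (Euc D) → Euc D → (Euc D →L[ℝ] Euc D)
  c : ℝ
  O : Measure (Euc D) → ℝ → ℝ
  c_pos : 0 < c
  A_mem : ∀ μ : Measure (Euc D), InM μ → MemL2 μ (A μ)
  B_meas : ∀ μ : Measure (Euc D), InM μ → AEStronglyMeasurable (B μ) μ
  B_bdd : ∀ μ : Measure (Euc D), InM μ → ∃ K : ℝ, ∀ᵐ x ∂μ, ‖B μ x‖ ≤ K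
  B_l2 : ∀ μ : Measure (Euc D), InM μ →
    Integrable (fun x => ‖B μ x‖ ^ 2) μ ∧ Real.sqrt (∫ x, ‖B μ x‖ ^ 2 ∂μ) ≤ c
  O_cont : ∀ μ : Measure (Euc D), Continuous (O μ)
  O_zero : ∀ μ : Measure (Euc D), O μ 0 = 0
  regular : ∀ μ ν : Measure (Euc D), InM μ → InM ν →
    ∀ γ : Measure (Euc D × Euc D), IsOptCoupling μ ν γ →
      ∫ p, ‖A ν p.2 - A μ p.1 - B μ p.1 (p.2 - p.1)‖ ^ 2 ∂γ ≤
        W2 μ ν ^ 2 * (min (O μ (W2 μ ν)) c) ^ 2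

theorem exists_lipschitzWith_of_eq_id_off_compact {E : Type*} [NormedAddCommGroup E]
    [NormedSpace ℝ E] {φ : E → E} (hφ : ContDiff ℝ 1 φ) {K : Set E} (hK : IsCompact K)
    (hid : ∀ x ∉ K, φ x = x) : ∃ L, LipschitzWith L φ := by
  have hφd : Differentiable ℝ φ := hφ.differentiable one_ne_zero
  have hsupp : HasCompactSupport fun x => φ x - x :=
    HasCompactSupport.intro hK fun x hx => sub_eq_zero.2 (hid x hx)
  obtain ⟨C, hC⟩ := ((hφ.sub contDiff_id).continuous_fderiv one_ne_zero
    ).bounded_above_of_compact_support (hsupp.fderiv ℝ)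
  have hbound (x : E) : ‖fderiv ℝ φ x‖ ≤ C + 1 := by
    have hx := hC x
    rw [fderiv_fun_sub (hφd x) differentiableAt_id, fderiv_id] at hx
    linarith [norm_sub_norm_le (fderiv ℝ φ x) (ContinuousLinearMap.id ℝ E),
      ContinuousLinearMap.norm_id_le (𝕜 := ℝ) (E := E)]
  refine ⟨(C + 1).toNNReal, lipschitzWith_of_nnnorm_fderiv_le hφd fun x => ?_⟩
  rw [← NNReal.coe_le_coe, coe_nnnorm]
  exact (hbound x).trans (Real.le_coe_toNNReal _)

theorem inM_iff {μ : Measure (Euc D)} : InM μ ↔ IsProbabilityMeasure μ ∧ MemLp id 2 μ := by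
  rw [InM, memLp_two_iff_integrable_sq_norm aestronglyMeasurable_id]
  rfl

theorem memL2_iff_memLp {μ : Measure (Euc D)} {X : Euc D → Euc D} : MemL2 μ X ↔ MemLp X 2 μ :=
  ⟨fun h => (memLp_two_iff_integrable_sq_norm h.1).2 h.2,
    fun h => ⟨h.1, (memLp_two_iff_integrable_sq_norm h.1).1 h⟩⟩

theorem InM.map_of_lipschitzWith {μ : Measure (Euc D)} (hμ : InM μ) {φ : Euc D → Euc D}
    {L : NNReal} (hφ : LipschitzWith L φ) : InM (μ.map φ) := by
  obtain ⟨hprob, hmem⟩ := inM_iff.1 hμ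
  have hmeas : Measurable φ := hφ.continuous.measurable
  refine inM_iff.2 ⟨Measure.isProbabilityMeasure_map hmeas.aemeasurable, ?_⟩
  rw [memLp_map_measure_iff aestronglyMeasurable_id hmeas.aemeasurable]
  have hsub : MemLp (fun x => φ x - φ 0) 2 μ :=
    hmem.of_le_mul (hφ.continuous.sub continuous_const).aestronglyMeasurable <|
      ae_of_all _ fun x => by simpa [dist_eq_norm] using hφ.dist_le_mul x 0
  convert hsub.add (memLp_const (φ 0)) using 1
  ext1 x
  simp

theorem isCoupling_prod (μ ν : Measure (Euc D)) [IsProbabilityMeasure μ]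
    [IsProbabilityMeasure ν] : IsCoupling μ ν (μ.prod ν) :=
  ⟨inferInstance, by simp, by simp⟩

section Coupling

variable {μ ν : Measure (Euc D)} {γ : Measure (Euc D × Euc D)}

theorem IsCoupling.map_prodMap {φ : Euc D → Euc D} (hφ : Measurable φ) (h : IsCoupling μ ν γ) :
    IsCoupling (μ.map φ) (ν.map φ) (γ.map (Prod.map φ φ)) := by
  obtain ⟨hγ, h1, h2⟩ := h
  refine ⟨Measure.isProbabilityMeasure_map (hφ.prodMap hφ).aemeasurable, ?_, ?_⟩
  · rw [Measure.map_map measurable_fst (hφ.prodMap hφ), ← h1, Measure.map_map hφ measurable_fst]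
    rfl
  · rw [Measure.map_map measurable_snd (hφ.prodMap hφ), ← h2, Measure.map_map hφ measurable_snd]
    rfl

theorem IsCoupling.integrable_cost (hμ : InM μ) (hν : InM ν) (h : IsCoupling μ ν γ) :
    Integrable (fun p => ‖p.1 - p.2‖ ^ 2) γ := by
  have hfst : MemLp Prod.fst 2 γ := by
    have := (inM_iff.1 hμ).2
    rwa [← h.2.1, memLp_map_measure_iff aestronglyMeasurable_id measurable_fst.aemeasurable] at this
  have hsnd : MemLp Prod.snd 2 γ := by
    have := (inM_iff.1 hν).2
    rwa [← h.2.2, memLp_map_measure_iff aestronglyMeasurable_id measurable_snd.aemeasurable] at this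
  exact (memLp_two_iff_integrable_sq_norm (by fun_prop)).1 (hfst.sub hsnd)

theorem Wcost_nonneg (γ : Measure (Euc D × Euc D)) : 0 ≤ Wcost γ :=
  integral_nonneg fun _ => by positivity

theorem W2sq_le_Wcost (h : IsCoupling μ ν γ) : W2sq μ ν ≤ Wcost γ :=
  csInf_le ⟨0, by rintro _ ⟨γ, -, rfl⟩; exact Wcost_nonneg γ⟩ ⟨γ, h, rfl⟩

theorem Wcost_map_le {φ : Euc D → Euc D} {L : NNReal} (hφ : LipschitzWith L φ)
    (hγ : Integrable (fun p => ‖p.1 - p.2‖ ^ 2) γ) :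
    Wcost (γ.map (Prod.map φ φ)) ≤ L ^ 2 * Wcost γ := by
  have hmeas : Measurable (Prod.map φ φ) :=
    hφ.continuous.measurable.prodMap hφ.continuous.measurable
  rw [Wcost, integral_map hmeas.aemeasurable (by fun_prop), Wcost, ← integral_const_mul]
  refine integral_mono_of_nonneg (ae_of_all _ fun _ => by positivity) (hγ.const_mul _)
    (ae_of_all _ fun p => ?_)
  calc ‖φ p.1 - φ p.2‖ ^ 2 ≤ (L * ‖p.1 - p.2‖) ^ 2 := by
        gcongr
        simpa [dist_eq_norm] using hφ.dist_le_mul p.1 p.2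
    _ = L ^ 2 * ‖p.1 - p.2‖ ^ 2 := mul_pow _ _ _

theorem W2sq_map_le (hμ : InM μ) (hν : InM ν) {φ : Euc D → Euc D} {L : NNReal}
    (hφ : LipschitzWith L φ) : W2sq (μ.map φ) (ν.map φ) ≤ L ^ 2 * W2sq μ ν := by
  have := hμ.1
  have := hν.1
  have hne : (Wcost '' {γ | IsCoupling μ ν γ}).Nonempty := ⟨_, μ.prod ν, isCoupling_prod μ ν, rfl⟩
  conv_rhs => rw [W2sq, ← smul_eq_mul, ← Real.sInf_smul_of_nonneg (by positivity)]
  refine le_csInf hne.smul_set ?_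
  rintro _ ⟨_, ⟨γ, hγ, rfl⟩, rfl⟩
  exact (W2sq_le_Wcost (hγ.map_prodMap hφ.continuous.measurable)).trans
    (Wcost_map_le hφ (hγ.integrable_cost hμ hν))

theorem W2_map_le (hμ : InM μ) (hν : InM ν) {φ : Euc D → Euc D} {L : NNReal}
    (hφ : LipschitzWith L φ) : W2 (μ.map φ) (ν.map φ) ≤ L * W2 μ ν :=
  calc W2 (μ.map φ) (ν.map φ) ≤ √(L ^ 2 * W2sq μ ν) := Real.sqrt_le_sqrt (W2sq_map_le hμ hν hφ)
    _ = L * W2 μ ν := by rw [Real.sqrt_mul (by positivity), Real.sqrt_sq L.coe_nonneg, W2]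

end Coupling

theorem IsAC2.map_of_lipschitzWith {a b : ℝ} {σ : ℝ → Measure (Euc D)} (hσ : IsAC2 a b σ)
    {φ : Euc D → Euc D} {L : NNReal} (hφ : LipschitzWith L φ) :
    IsAC2 a b (fun t => (σ t).map φ) := by
  obtain ⟨hM, β, hβ, hW⟩ := hσ
  refine ⟨fun t ht => (hM t ht).map_of_lipschitzWith hφ, fun τ => L * β τ, ?_,
    fun s t has hst htb => ?_⟩
  · simpa only [mul_pow] using hβ.const_mul ((L : ℝ) ^ 2)
  · rw [intervalIntegral.integral_const_mul]
    exact (W2_map_le (hM s ⟨has, hst.trans htb⟩) (hM t ⟨has.trans hst, htb⟩) hφ).trans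
      (by gcongr; exact hW s t has hst htb)

theorem memL2_map_iff {φ : Euc D → Euc D} (hφ : MeasurableEmbedding φ) {μ : Measure (Euc D)}
    {Y : Euc D → Euc D} : MemL2 (μ.map φ) Y ↔ MemL2 μ (Y ∘ φ) := by
  rw [MemL2, MemL2, hφ.aestronglyMeasurable_map_iff, hφ.integrable_map_iff]
  rfl

theorem MemL2.clm_apply {μ : Measure (Euc D)} {X : Euc D → Euc D} (hX : MemL2 μ X)
    {A : Euc D → Euc D →L[ℝ] Euc D} (hA : Continuous A) {C : ℝ} (hC : ∀ x, ‖A x‖ ≤ C) :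
    MemL2 μ (fun x => A x (X x)) :=
  memL2_iff_memLp.2 <| (memL2_iff_memLp.1 hX).of_le_mul
    (by have := hX.1; fun_prop) (ae_of_all _ fun x => (A x).le_of_opNorm_le (hC x) _)

theorem integral_map_add_fderiv_pushforward {E : Type*} [NormedAddCommGroup E]
    [NormedSpace ℝ E] [MeasurableSpace E] [BorelSpace E] (e : E ≃ₜ E) (he : Differentiable ℝ e)
    (μ : Measure E) (X : E → E) (g : E → ℝ) {f : E → ℝ}
    (hf : Differentiable ℝ f) :
    ∫ y, (g y + fderiv ℝ f y (fderiv ℝ e (e.symm y) (X (e.symm y)))) ∂(μ.map e) =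
      ∫ x, (g (e x) + fderiv ℝ (fun x => f (e x)) x (X x)) ∂μ := by
  rw [e.measurableEmbedding.integral_map]
  congr 1 with x
  rw [e.symm_apply_apply, fderiv_fun_comp x (hf _) (he x)]
  rfl

theorem IsVelocity.map_homeomorph {a b : ℝ} {σ : ℝ → Measure (Euc D)}
    {v : ℝ → Euc D → Euc D} (hv : IsVelocity a b σ v) (e : Euc D ≃ₜ Euc D)
    (he : ContDiff ℝ (⊤ : ℕ∞) e) {L : NNReal} (hL : LipschitzWith L e) :
    IsVelocity a b (fun t => (σ t).map e) (fun t y => fderiv ℝ e (e.symm y) (v t (e.symm y))) := by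
  obtain ⟨hmeas, hmemL2, hcont⟩ := hv
  have hde : Continuous (fderiv ℝ e) := he.continuous_fderiv (by simp)
  refine ⟨?_, ?_, fun u hu hsupp hab => ?_⟩
  · have hv' : Measurable fun p : ℝ × Euc D => v p.1 (e.symm p.2) :=
      hmeas.comp (measurable_fst.prodMk (e.symm.continuous.measurable.comp measurable_snd))
    have hA : Measurable fun p : ℝ × Euc D => fderiv ℝ e (e.symm p.2) :=
      (hde.comp (e.symm.continuous.comp continuous_snd)).measurable
    fun_prop
  · filter_upwards [hmemL2] with t ht
    rw [memL2_map_iff e.measurableEmbedding]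
    simpa [Function.comp_def] using ht.clm_apply hde fun x => norm_fderiv_le_of_lipschitz ℝ hL
  · have hφu := hcont (fun s x => u s (e x)) (hu.comp (contDiff_id.prodMap he))
      (hsupp.comp_homeomorph ((Homeomorph.refl ℝ).prodCongr e))
      fun p hp => ⟨(hab (tsupport_comp_subset_preimage _
        (continuous_id.prodMap e.continuous) hp)).1, mem_univ _⟩
    rw [← hφu]
    congr 1 with t
    exact integral_map_add_fderiv_pushforward e (he.differentiable (by simp)) _ _ _
      ((hu.comp (contDiff_prodMk_right t)).differentiable (by simp))

/-- Push-forward of an `AC₂` curve by a compactly supported diffeomorphism is `AC₂`, and the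
push-forward of a velocity is a velocity for the push-forward curve. -/
theorem stmt2 {D : ℕ} (a b : ℝ)
    (σ : ℝ → Measure (Euc D)) (v : ℝ → Euc D → Euc D)
    (φ ψ : Euc D → Euc D)
    (hφ : ContDiff ℝ (⊤ : ℕ∞) φ) (hψ : ContDiff ℝ (⊤ : ℕ∞) ψ)
    (hlinv : Function.LeftInverse ψ φ) (hrinv : Function.RightInverse ψ φ)
    (K : Set (Euc D)) (hK : IsCompact K) (hid : ∀ x ∉ K, φ x = x)
    (hσ : IsAC2 a b σ) (hv : IsVelocity a b σ v) :
    IsAC2 a b (fun t => (σ t).map φ) ∧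
    IsVelocity a b (fun t => (σ t).map φ)
      (fun t y => fderiv ℝ φ (ψ y) (v t (ψ y))) := by
  obtain ⟨L, hL⟩ := exists_lipschitzWith_of_eq_id_off_compact (hφ.of_le (by simp)) hK hid
  let e : Euc D ≃ₜ Euc D := ⟨⟨φ, ψ, hlinv, hrinv⟩, hφ.continuous, hψ.continuous⟩
  exact ⟨hσ.map_of_lipschitzWith hL, hv.map_homeomorph e hφ hL⟩

end
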